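/- For every nonnegative integer k, (√5 - 1)·k!(k+1)!/(4π (1/10)_{k+1}(9/10)_{k+1}) = 1 + (9/100)·k! · ∑_{n=0}^∞ (1/10)_n (9/10)_n/((n+1)!(n+k+1)!). -/

import Mathlib

open Real

noncomputable def rising (x : ℝ) (n : ℕ) : ℝ := ∏ i ∈ Finset.range n, (x + i)

lemma rising_zero (x : ℝ) : rising x 0 = 1 := by simp [rising]

lemma rising_succ (x : ℝ) (n : ℕ) : rising x (n + 1) = rising x n * (x + n) := by
  simp [rising, Finset.prod_range_succ]

lemma rising_succ' (x : ℝ) (n : ℕ) : rising x (n + 1) = x * rising (x + 1) n := by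
  simp only [rising, Finset.prod_range_succ']
  rw [mul_comm]
  congr 1
  · simp
  · apply Finset.prod_congr rfl; intro i _; push_cast; ring

lemma rising_add (x : ℝ) (m n : ℕ) :
    rising x (m + n) = rising x m * rising (x + m) n := by
  simp only [rising, Finset.prod_range_add]
  congr 1
  apply Finset.prod_congr rfl; intro i _; push_cast; ring

lemma rising_pos {x : ℝ} (hx : 0 < x) (n : ℕ) : 0 < rising x n := by
  apply Finset.prod_pos
  intro i _
  positivity

lemma rising_le {x y : ℝ} (hx : 0 ≤ x) (h : x ≤ y) (n : ℕ) : rising x n ≤ rising y n := by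
  apply Finset.prod_le_prod
  · intro i _; positivity
  · intro i _; linarith

lemma rising_one (n : ℕ) : rising 1 n = n.factorial := by
  induction n with
  | zero => simp [rising_zero]
  | succ n ih => rw [rising_succ, ih]; push_cast [Nat.factorial_succ]; ring

lemma rising_two (n : ℕ) : rising 2 n = (n + 1).factorial := by
  induction n with
  | zero => simp [rising_zero]
  | succ n ih => rw [rising_succ, ih]; push_cast [Nat.factorial_succ]; ring

lemma rising_nat (k n : ℕ) : (k.factorial : ℝ) * rising ((k : ℝ) + 1) n = (k + n).factorial := by
  induction n with
  | zero => simp [rising_zero]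
  | succ n ih =>
    rw [rising_succ, ← mul_assoc, ih, show k + (n+1) = (k + n) + 1 by ring]
    push_cast [Nat.factorial_succ]
    ring

noncomputable def tt (c : ℝ) (m : ℕ) : ℝ :=
  rising (-(1/10)) m * rising (-(9/10)) m / (rising c m * m.factorial)

lemma tt_zero (c : ℝ) : tt c 0 = 1 := by simp [tt, rising_zero]

lemma num_succ (m : ℕ) :
    rising (-(1/10)) (m + 1) * rising (-(9/10)) (m + 1)
      = (9/100) * (rising (1/10) m * rising (9/10) m) := by
  rw [rising_succ' (-(1/10)), rising_succ' (-(9/10))]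
  norm_num
  ring

lemma num_nonneg (m : ℕ) : 0 ≤ rising (-(1/10)) m * rising (-(9/10)) m := by
  cases m with
  | zero => simp [rising_zero]
  | succ m =>
    rw [num_succ]
    have h1 := rising_pos (by norm_num : (0:ℝ) < 1/10) m
    have h9 := rising_pos (by norm_num : (0:ℝ) < 9/10) m
    positivity

lemma tt_nonneg {c : ℝ} (hc : 0 < c) (m : ℕ) : 0 ≤ tt c m := by
  have h1 := rising_pos hc m
  have h2 := Nat.factorial_pos m
  have := num_nonneg m
  apply div_nonneg this
  positivity

lemma tt_bound {c : ℝ} (hc : 1 ≤ c) (m : ℕ) :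
    tt c (m + 1) ≤ 9 / (100 * c * (m + 1) ^ 2) := by
  have hc0 : (0:ℝ) < c := by linarith
  have hnum : rising (-(1/10)) (m+1) * rising (-(9/10)) (m+1)
      ≤ (9/100) * ((m.factorial : ℝ) * m.factorial) := by
    rw [num_succ]
    have h1 : rising (1/10) m ≤ rising 1 m := rising_le (by norm_num) (by norm_num) m
    have h9 : rising (9/10) m ≤ rising 1 m := rising_le (by norm_num) (by norm_num) m
    have hp1 := rising_pos (by norm_num : (0:ℝ) < 1/10) m
    have hp9 := rising_pos (by norm_num : (0:ℝ) < 9/10) m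
    rw [rising_one] at h1 h9
    have := mul_le_mul h1 h9 (le_of_lt hp9) (by positivity)
    nlinarith
  have hden : (c * (m+1).factorial) * (m+1).factorial ≤ rising c (m+1) * (m+1).factorial := by
    have : rising c (m+1) = c * rising (c+1) m := rising_succ' c m
    have h2 : rising 2 m ≤ rising (c+1) m := rising_le (by norm_num) (by linarith) m
    rw [rising_two] at h2
    have hf : (0:ℝ) < (m+1).factorial := by exact_mod_cast Nat.factorial_pos _
    rw [this]
    have : (m+1).factorial ≤ rising (c+1) m := by
      calc ((m+1).factorial : ℝ) = rising 2 m := by rw [rising_two]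
        _ ≤ _ := rising_le (by norm_num) (by linarith) m
    nlinarith [mul_le_mul_of_nonneg_right (mul_le_mul_of_nonneg_left this (le_of_lt hc0)) (le_of_lt hf)]
  have hdpos : (0:ℝ) < rising c (m+1) * (m+1).factorial := by
    have := rising_pos hc0 (m+1)
    have := Nat.factorial_pos (m+1)
    positivity
  have hfacpos : (0:ℝ) < (m+1).factorial := by exact_mod_cast Nat.factorial_pos _
  calc tt c (m+1) ≤ ((9/100) * ((m.factorial : ℝ) * m.factorial)) / ((c * (m+1).factorial) * (m+1).factorial) := by
        apply div_le_div₀ (by positivity) hnum (by positivity)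
        exact hden
    _ = 9 / (100 * c * (m + 1) ^ 2) := by
        have h : ((m+1).factorial : ℝ) = (m+1) * m.factorial := by
          push_cast [Nat.factorial_succ]; ring
        have hm : (0:ℝ) < m.factorial := by exact_mod_cast Nat.factorial_pos m
        rw [h]
        field_simp

lemma summable_shift {c : ℝ} (hc : 1 ≤ c) : Summable (fun m : ℕ => tt c (m + 1)) := by
  have hc0 : (0:ℝ) < c := by linarith
  have hbase : Summable (fun m : ℕ => (1:ℝ) / ((m:ℝ) + 1) ^ 2) := by
    have := Real.summable_one_div_nat_pow.mpr (le_refl 2)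
    exact_mod_cast (summable_nat_add_iff 1).mpr this
  apply Summable.of_nonneg_of_le (fun m => tt_nonneg hc0 (m+1))
    (fun m => ?_) (hbase.mul_left (9 / (100 * c)))
  have := tt_bound hc m
  calc tt c (m+1) ≤ 9 / (100 * c * ((m:ℝ) + 1) ^ 2) := by exact_mod_cast this
    _ = 9 / (100 * c) * (1 / ((m:ℝ)+1)^2) := by
        field_simp

lemma summable_tt {c : ℝ} (hc : 1 ≤ c) : Summable (tt c) :=
  (summable_nat_add_iff 1).mp (summable_shift hc)

noncomputable def FF (c : ℝ) : ℝ := ∑' m : ℕ, tt c m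

lemma key_identity {c : ℝ} (hc : 0 < c) (m : ℕ) :
    c * (c+1) * tt c m - (c + 1/10) * (c + 9/10) * tt (c+1) m
      = c * m * tt c m - c * (m+1) * tt c (m+1) := by
  have hR : rising c m ≠ 0 := ne_of_gt (rising_pos hc m)
  have hcm : c + (m:ℝ) ≠ 0 := by positivity
  have hf : ((m.factorial : ℝ)) ≠ 0 := by exact_mod_cast (Nat.factorial_pos m).ne'
  have hc' : c ≠ 0 := ne_of_gt hc
  have e1 : rising (c+1) m = rising c m * (c + m) / c := by
    have h1 : rising c (m+1) = rising c m * (c + m) := rising_succ c m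
    have h2 : rising c (m+1) = c * rising (c+1) m := rising_succ' c m
    field_simp
    linarith [h1, h2]
  have e2 : rising (-(1/10)) (m+1) = rising (-(1/10)) m * (-(1/10) + m) := rising_succ _ m
  have e3 : rising (-(9/10)) (m+1) = rising (-(9/10)) m * (-(9/10) + m) := rising_succ _ m
  have e4 : rising c (m+1) = rising c m * (c + m) := rising_succ c m
  have e5 : ((m+1).factorial : ℝ) = (m+1) * m.factorial := by
    push_cast [Nat.factorial_succ]; ring
  simp only [tt, e1, e2, e3, e4, e5]
  have hm1 : ((m:ℝ) + 1) ≠ 0 := by positivity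
  field_simp
  ring

lemma step_rel {c : ℝ} (hc : 1 ≤ c) :
    c * (c+1) * FF c = (c + 1/10) * (c + 9/10) * FF (c+1) := by
  have hc0 : (0:ℝ) < c := by linarith
  have hs1 : Summable (fun m => c * (c+1) * tt c m) := (summable_tt hc).mul_left _
  have hs2 : Summable (fun m => (c + 1/10) * (c + 9/10) * tt (c+1) m) :=
    (summable_tt (by linarith : (1:ℝ) ≤ c + 1)).mul_left _
  have hsum : HasSum (fun m => c * (c+1) * tt c m - (c + 1/10) * (c + 9/10) * tt (c+1) m) 0 := by
    rw [(hs1.sub hs2).hasSum_iff_tendsto_nat]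
    have hps : ∀ n : ℕ, (∑ i ∈ Finset.range n,
        (c * (c+1) * tt c i - (c + 1/10) * (c + 9/10) * tt (c+1) i))
        = - (c * n * tt c n) := by
      intro n
      have h := Finset.sum_range_sub' (fun i : ℕ => c * (i:ℝ) * tt c i) n
      rw [show -(c * (n:ℝ) * tt c n) = c * ((0:ℕ):ℝ) * tt c 0 - c * (n:ℝ) * tt c n by simp, ← h]
      apply Finset.sum_congr rfl
      intro i _
      push_cast
      linarith [key_identity hc0 i]
    simp only [hps]
    rw [show (0:ℝ) = -0 by ring]
    apply Filter.Tendsto.neg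
    apply squeeze_zero (fun n => mul_nonneg (by positivity) (tt_nonneg hc0 n))
    · intro n
      show c * n * tt c n ≤ (9/100) / (n:ℝ)
      cases n with
      | zero => simp
      | succ m =>
        have hb := tt_bound hc m
        have h1 : c * ((m:ℝ)+1) * tt c (m+1) ≤ c * ((m:ℝ)+1) * (9 / (100 * c * ((m:ℝ)+1)^2)) := by
          apply mul_le_mul_of_nonneg_left _ (by positivity)
          exact_mod_cast hb
        calc c * ((m+1:ℕ):ℝ) * tt c (m+1) ≤ c * ((m:ℝ)+1) * (9 / (100 * c * ((m:ℝ)+1)^2)) := by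
              push_cast; exact_mod_cast h1
          _ = (9/100) / (((m+1:ℕ):ℝ)) := by push_cast; field_simp
    · exact tendsto_const_div_atTop_nhds_zero_nat (9/100)
  have h0 : c * (c+1) * FF c - (c + 1/10) * (c + 9/10) * FF (c+1) = 0 := by
    have := hsum.tsum_eq
    rw [Summable.tsum_sub hs1 hs2, tsum_mul_left, tsum_mul_left] at this
    exact this
  linarith

noncomputable def DD : ℝ := ∑' m : ℕ, (9:ℝ) / (100 * ((m:ℝ) + 1) ^ 2)

lemma summable_DD : Summable (fun m : ℕ => (9:ℝ) / (100 * ((m:ℝ) + 1) ^ 2)) := by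
  have hbase : Summable (fun m : ℕ => (1:ℝ) / ((m:ℝ) + 1) ^ 2) := by
    have := Real.summable_one_div_nat_pow.mpr (le_refl 2)
    exact_mod_cast (summable_nat_add_iff 1).mpr this
  have := hbase.mul_left (9/100 : ℝ)
  refine this.congr (fun m => ?_)
  rw [mul_one_div, div_div]

lemma FF_eq {c : ℝ} (hc : 1 ≤ c) : FF c = 1 + ∑' m : ℕ, tt c (m + 1) := by
  rw [FF, Summable.tsum_eq_zero_add (summable_tt hc), tt_zero]

lemma FF_lower {c : ℝ} (hc : 1 ≤ c) : 1 ≤ FF c := by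
  rw [FF_eq hc]
  have : 0 ≤ ∑' m : ℕ, tt c (m+1) :=
    tsum_nonneg (fun m => tt_nonneg (by linarith) (m+1))
  linarith

lemma FF_upper {c : ℝ} (hc : 1 ≤ c) : FF c ≤ 1 + DD / c := by
  rw [FF_eq hc]
  have hc0 : (0:ℝ) < c := by linarith
  have h1 : ∑' m : ℕ, tt c (m+1) ≤ ∑' m : ℕ, (1/c) * ((9:ℝ)/(100*((m:ℝ)+1)^2)) := by
    apply Summable.tsum_le_tsum _ (summable_shift hc) (summable_DD.mul_left _)
    intro m
    have := tt_bound hc m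
    calc tt c (m+1) ≤ 9 / (100 * c * ((m:ℝ)+1)^2) := by exact_mod_cast this
      _ = (1/c) * ((9:ℝ)/(100*((m:ℝ)+1)^2)) := by field_simp
  rw [tsum_mul_left] at h1
  have : (1/c) * DD = DD / c := by ring
  rw [DD] at this ⊢
  linarith [h1, this]
noncomputable def rr (c : ℝ) : ℝ := (c + 1/10) * (c + 9/10) / (c * (c+1))

lemma FF_step {c : ℝ} (hc : 1 ≤ c) : FF c = rr c * FF (c+1) := by
  have hc0 : (0:ℝ) < c := by linarith
  have h := step_rel hc
  rw [rr]
  field_simp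
  linarith [h]

lemma one_le_cast (k J : ℕ) : (1:ℝ) ≤ (k:ℝ) + 1 + J := by
  have h1 : (0:ℝ) ≤ (k:ℝ) := Nat.cast_nonneg k
  have h2 : (0:ℝ) ≤ (J:ℝ) := Nat.cast_nonneg J
  linarith

lemma FF_iter (k J : ℕ) :
    FF ((k:ℝ) + 1) = (∏ j ∈ Finset.range J, rr ((k:ℝ) + 1 + j)) * FF ((k:ℝ) + 1 + J) := by
  induction J with
  | zero => simp
  | succ J ih =>
    rw [Finset.prod_range_succ, ih, FF_step (one_le_cast k J)]
    push_cast
    ring_nf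

lemma FF_tail_tendsto (k : ℕ) :
    Filter.Tendsto (fun J : ℕ => FF ((k:ℝ) + 1 + J)) Filter.atTop (nhds 1) := by
  have hc : ∀ J : ℕ, (1:ℝ) ≤ (k:ℝ) + 1 + J := one_le_cast k
  apply tendsto_of_tendsto_of_tendsto_of_le_of_le
    (g := fun _ : ℕ => (1:ℝ)) (h := fun J : ℕ => 1 + DD / ((k:ℝ) + 1 + J))
  · exact tendsto_const_nhds
  · have h0 : Filter.Tendsto (fun J : ℕ => DD / ((k:ℝ) + 1 + J)) Filter.atTop (nhds 0) := by
      apply Filter.Tendsto.div_atTop tendsto_const_nhds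
      apply Filter.tendsto_atTop_add_const_left
      exact tendsto_natCast_atTop_atTop
    simpa using h0.const_add 1
  · exact fun J => FF_lower (hc J)
  · exact fun J => FF_upper (hc J)

lemma prod_tendsto (k : ℕ) :
    Filter.Tendsto (fun J : ℕ => ∏ j ∈ Finset.range J, rr ((k:ℝ) + 1 + j))
      Filter.atTop (nhds (FF ((k:ℝ) + 1))) := by
  have hne : ∀ J : ℕ, FF ((k:ℝ) + 1 + J) ≠ 0 := fun J =>
    ne_of_gt (lt_of_lt_of_le one_pos (FF_lower (one_le_cast k J)))
  have heq : ∀ J : ℕ, (∏ j ∈ Finset.range J, rr ((k:ℝ) + 1 + j))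
      = FF ((k:ℝ) + 1) / FF ((k:ℝ) + 1 + J) := by
    intro J
    rw [FF_iter k J]
    field_simp [hne J]
  simp only [heq]
  have := Filter.Tendsto.div (tendsto_const_nhds (x := FF ((k:ℝ)+1)))
    (FF_tail_tendsto k) one_ne_zero
  rw [div_one] at this
  exact this



lemma prod_shift_rising (x : ℝ) (J : ℕ) :
    ∏ j ∈ Finset.range J, (x + (j:ℝ)) = rising x J := rfl

lemma rising_split (x : ℝ) (k J : ℕ) :
    rising (x + (k:ℝ) + 1) J = rising x (k + 1 + J) / rising x (k+1) ∨ True := Or.inr trivial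

lemma prod_formula (k J : ℕ) :
    ∏ j ∈ Finset.range J, rr ((k:ℝ) + 1 + j)
      = ((k.factorial : ℝ) * ((k+1).factorial : ℝ)
          / (rising (1/10) (k+1) * rising (9/10) (k+1)))
        * (rising (1/10) (k + J + 1) * rising (9/10) (k + J + 1)
            / ((((k+J).factorial : ℝ)) * (((k+J+1).factorial : ℝ)))) := by
  have hR1 : rising (1/10 : ℝ) (k+1) ≠ 0 := ne_of_gt (rising_pos (by norm_num) _)
  have hR9 : rising (9/10 : ℝ) (k+1) ≠ 0 := ne_of_gt (rising_pos (by norm_num) _)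
  have hA : ∏ j ∈ Finset.range J, ((k:ℝ) + 1 + j + 1/10)
      = rising (1/10) (k + 1 + J) / rising (1/10) (k+1) := by
    have h1 : rising ((1:ℝ)/10) (k + 1 + J)
        = rising (1/10) (k+1) * rising ((1:ℝ)/10 + (k+1 : ℕ)) J := rising_add _ _ _
    have h2 : rising ((1:ℝ)/10 + ((k+1 : ℕ):ℝ)) J = ∏ j ∈ Finset.range J, ((k:ℝ) + 1 + j + 1/10) := by
      unfold rising; apply Finset.prod_congr rfl; intros; push_cast; ring
    rw [← h2, h1]; field_simp
  have hB : ∏ j ∈ Finset.range J, ((k:ℝ) + 1 + j + 9/10)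
      = rising (9/10) (k + 1 + J) / rising (9/10) (k+1) := by
    have h1 : rising ((9:ℝ)/10) (k + 1 + J)
        = rising (9/10) (k+1) * rising ((9:ℝ)/10 + (k+1 : ℕ)) J := rising_add _ _ _
    have h2 : rising ((9:ℝ)/10 + ((k+1 : ℕ):ℝ)) J = ∏ j ∈ Finset.range J, ((k:ℝ) + 1 + j + 9/10) := by
      unfold rising; apply Finset.prod_congr rfl; intros; push_cast; ring
    rw [← h2, h1]; field_simp
  have hC : ∏ j ∈ Finset.range J, ((k:ℝ) + 1 + j)
      = ((k+J).factorial : ℝ) / (k.factorial : ℝ) := by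
    have h1 := rising_nat k J
    have h2 : rising ((k:ℝ) + 1) J = ∏ j ∈ Finset.range J, ((k:ℝ) + 1 + j) := by
      unfold rising; apply Finset.prod_congr rfl; intros; push_cast; ring
    have hf : (k.factorial : ℝ) ≠ 0 := by exact_mod_cast (Nat.factorial_pos k).ne'
    rw [← h2]
    field_simp
    linarith [h1]
  have hD : ∏ j ∈ Finset.range J, ((k:ℝ) + 1 + j + 1)
      = ((k+1+J).factorial : ℝ) / ((k+1).factorial : ℝ) := by
    have h1 := rising_nat (k+1) J
    have h2 : rising (((k+1:ℕ)):ℝ) J = 0 ∨ True := Or.inr trivial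
    have h3 : rising (((k+1:ℕ):ℝ) + 1) J = ∏ j ∈ Finset.range J, ((k:ℝ) + 1 + j + 1) := by
      unfold rising; apply Finset.prod_congr rfl; intros; push_cast; ring
    have hf : ((k+1).factorial : ℝ) ≠ 0 := by exact_mod_cast (Nat.factorial_pos (k+1)).ne'
    rw [← h3]
    push_cast at h1 ⊢
    field_simp
    linarith [h1]
  have expand : ∏ j ∈ Finset.range J, rr ((k:ℝ) + 1 + j)
      = (∏ j ∈ Finset.range J, ((k:ℝ) + 1 + j + 1/10))
        * (∏ j ∈ Finset.range J, ((k:ℝ) + 1 + j + 9/10))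
        / ((∏ j ∈ Finset.range J, ((k:ℝ) + 1 + j))
        * (∏ j ∈ Finset.range J, ((k:ℝ) + 1 + j + 1))) := by
    rw [← Finset.prod_mul_distrib, ← Finset.prod_mul_distrib, ← Finset.prod_div_distrib]
    rfl
  rw [expand, hA, hB, hC, hD]
  have hf0 : (k.factorial : ℝ) ≠ 0 := by exact_mod_cast (Nat.factorial_pos k).ne'
  have hf1 : ((k+1).factorial : ℝ) ≠ 0 := by exact_mod_cast (Nat.factorial_pos (k+1)).ne'
  have hf2 : ((k+J).factorial : ℝ) ≠ 0 := by exact_mod_cast (Nat.factorial_pos (k+J)).ne'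
  have hf3 : ((k+J+1).factorial : ℝ) ≠ 0 := by exact_mod_cast (Nat.factorial_pos (k+J+1)).ne'
  have e1 : k + 1 + J = k + J + 1 := by ring
  rw [e1]
  field_simp

lemma sin_pi_div_ten : Real.sin (π * (1/10)) = (Real.sqrt 5 - 1) / 4 := by
  have h1 : Real.sin (π * (1/10)) = Real.cos (π/2 - π * (1/10)) := (Real.cos_pi_div_two_sub _).symm
  have h2 : π/2 - π * (1/10) = 2 * (π/5) := by ring
  rw [h1, h2, Real.cos_two_mul, Real.cos_pi_div_five]
  have h5 : Real.sqrt 5 ^ 2 = 5 := Real.sq_sqrt (by norm_num)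
  nlinarith [Real.sqrt_nonneg 5]

lemma sqrt5_gt_one : (1:ℝ) < Real.sqrt 5 := by
  nlinarith [Real.sq_sqrt (show (0:ℝ) ≤ 5 by norm_num), Real.sqrt_nonneg 5]

lemma gamma_prod : Real.Gamma (1/10) * Real.Gamma (9/10) = 4 * π / (Real.sqrt 5 - 1) := by
  have h := Real.Gamma_mul_Gamma_one_sub (1/10)
  norm_num at h
  rw [h, sin_pi_div_ten]
  have h5 := sqrt5_gt_one
  have hpi := Real.pi_pos
  field_simp

lemma GammaSeq_eq (s : ℝ) (N : ℕ) :
    Real.GammaSeq s N = (N:ℝ) ^ s * N.factorial / rising s (N+1) := rfl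

lemma QQ_tendsto :
    Filter.Tendsto (fun N : ℕ => rising (1/10) (N+1) * rising (9/10) (N+1)
        / ((N.factorial : ℝ) * ((N+1).factorial : ℝ)))
      Filter.atTop (nhds ((Real.sqrt 5 - 1) / (4*π))) := by
  have hG1 := Real.GammaSeq_tendsto_Gamma (1/10)
  have hG9 := Real.GammaSeq_tendsto_Gamma (9/10)
  have hΓ1 : 0 < Real.Gamma (1/10) := Real.Gamma_pos_of_pos (by norm_num)
  have hΓ9 : 0 < Real.Gamma (9/10) := Real.Gamma_pos_of_pos (by norm_num)
  have hmul : Filter.Tendsto (fun N : ℕ => ((N:ℝ)/((N:ℝ)+1)) *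
      (Real.GammaSeq (1/10) N * Real.GammaSeq (9/10) N)⁻¹) Filter.atTop
      (nhds (1 * (Real.Gamma (1/10) * Real.Gamma (9/10))⁻¹)) := by
    apply Filter.Tendsto.mul
    · exact_mod_cast tendsto_natCast_div_add_atTop (1:ℝ)
    · exact (hG1.mul hG9).inv₀ (by positivity)
  have hval : 1 * (Real.Gamma (1/10) * Real.Gamma (9/10))⁻¹ = (Real.sqrt 5 - 1) / (4*π) := by
    rw [one_mul, gamma_prod]
    have h5 := sqrt5_gt_one
    have hpi := Real.pi_pos
    rw [inv_div]
  rw [hval] at hmul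
  apply hmul.congr'
  filter_upwards [Filter.eventually_ge_atTop 1] with N hN
  have hN0 : (0:ℝ) < (N:ℝ) := by exact_mod_cast hN
  rw [GammaSeq_eq, GammaSeq_eq]
  have hr1 : 0 < rising (1/10 : ℝ) (N+1) := rising_pos (by norm_num) _
  have hr9 : 0 < rising (9/10 : ℝ) (N+1) := rising_pos (by norm_num) _
  have hfN : (0:ℝ) < N.factorial := by exact_mod_cast Nat.factorial_pos N
  have hpow : (N:ℝ) ^ (1/10 : ℝ) * (N:ℝ) ^ (9/10 : ℝ) = (N:ℝ) := by
    rw [← Real.rpow_add hN0]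
    norm_num
  have hfN1 : ((N+1).factorial : ℝ) = ((N:ℝ)+1) * N.factorial := by
    push_cast [Nat.factorial_succ]; ring
  have hp1 : (0:ℝ) < (N:ℝ) ^ (1/10 : ℝ) := Real.rpow_pos_of_pos hN0 _
  have hp9 : (0:ℝ) < (N:ℝ) ^ (9/10 : ℝ) := Real.rpow_pos_of_pos hN0 _
  set P := (N:ℝ) ^ (1/10 : ℝ) with hP
  set Q := (N:ℝ) ^ (9/10 : ℝ) with hQ
  rw [hfN1, mul_inv, inv_div, inv_div, ← hpow]
  field_simp

lemma FF_value (k : ℕ) :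
    FF ((k:ℝ) + 1) = ((k.factorial : ℝ) * ((k+1).factorial : ℝ)
      / (rising (1/10) (k+1) * rising (9/10) (k+1))) * ((Real.sqrt 5 - 1) / (4*π)) := by
  apply tendsto_nhds_unique (prod_tendsto k)
  have h := Filter.Tendsto.const_mul
    ((k.factorial : ℝ) * ((k+1).factorial : ℝ) / (rising (1/10) (k+1) * rising (9/10) (k+1)))
    (QQ_tendsto.comp (Filter.tendsto_add_atTop_nat k))
  apply h.congr
  intro J
  simp only [Function.comp_apply]
  rw [prod_formula k J, show k + J = J + k from Nat.add_comm k J]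

lemma tt_term (k n : ℕ) :
    tt ((k:ℝ) + 1) (n+1) = (9/100) * (k.factorial : ℝ) *
      (rising (1/10) n * rising (9/10) n
        / (((n+1).factorial : ℝ) * ((n+k+1).factorial : ℝ))) := by
  rw [tt, num_succ]
  have hk : (k.factorial : ℝ) ≠ 0 := by exact_mod_cast (Nat.factorial_pos k).ne'
  have hf1 : ((n+1).factorial : ℝ) ≠ 0 := by exact_mod_cast (Nat.factorial_pos (n+1)).ne'
  have hf2 : ((n+k+1).factorial : ℝ) ≠ 0 := by exact_mod_cast (Nat.factorial_pos (n+k+1)).ne'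
  have hris : rising ((k:ℝ)+1) (n+1) = ((n+k+1).factorial : ℝ) / (k.factorial : ℝ) := by
    have h := rising_nat k (n+1)
    rw [show n+k+1 = k+(n+1) by ring]
    field_simp
    linarith [h]
  rw [hris]
  field_simp

lemma FF_series (k : ℕ) :
    FF ((k:ℝ) + 1) = 1 + (9/100) * (k.factorial : ℝ) *
      ∑' n : ℕ, rising (1/10) n * rising (9/10) n
        / (((n+1).factorial : ℝ) * ((n+k+1).factorial : ℝ)) := by
  have hc : (1:ℝ) ≤ (k:ℝ) + 1 := by
    have : (0:ℝ) ≤ (k:ℝ) := Nat.cast_nonneg k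
    linarith
  rw [FF_eq hc]
  congr 1
  have : ∀ n : ℕ, tt ((k:ℝ)+1) (n+1) = (9/100) * (k.factorial : ℝ) *
      (rising (1/10) n * rising (9/10) n
        / (((n+1).factorial : ℝ) * ((n+k+1).factorial : ℝ))) := tt_term k
  rw [tsum_congr this, tsum_mul_left]

theorem stmt17 (k : ℕ) :
    (Real.sqrt 5 - 1) * (k.factorial : ℝ) * ((k + 1).factorial : ℝ) / (4 * π * rising (1/10) (k + 1) * rising (9/10) (k + 1)) =
    1 + (9/100) * (k.factorial : ℝ) *
      ∑' n : ℕ, rising (1/10) n * rising (9/10) n /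
        ((n + 1).factorial * (n + k + 1).factorial) := by
  have h1 := FF_value k
  have h2 := FF_series k
  have hR1 : rising (1/10 : ℝ) (k+1) ≠ 0 := ne_of_gt (rising_pos (by norm_num) _)
  have hR9 : rising (9/10 : ℝ) (k+1) ≠ 0 := ne_of_gt (rising_pos (by norm_num) _)
  have hpi : π ≠ 0 := Real.pi_ne_zero
  have hLHS : (Real.sqrt 5 - 1) * (k.factorial : ℝ) * ((k + 1).factorial : ℝ)
      / (4 * π * rising (1/10) (k + 1) * rising (9/10) (k + 1))
      = ((k.factorial : ℝ) * ((k+1).factorial : ℝ)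
        / (rising (1/10) (k+1) * rising (9/10) (k+1))) * ((Real.sqrt 5 - 1) / (4*π)) := by
    field_simp
  rw [hLHS, ← h1, h2]
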